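/- Let f : ℝ^d → ℝ be thrice differentiable whose Hessian is H-Lipschitz, let θ* satisfy ∇f(θ*) = 0 with ∇²f(θ*) positive semidefinite, and let ρ be a mean-zero probability measure on ℝ^d with E_{θ∼ρ}[θθᵀ] = c²·I for some c ≥ ‖θ*‖₂. Then EGOP(f) = H(θ*) + E_f(θ*), where H(θ*) := ∇²f(θ*)·(c²·I + θ*(θ*)ᵀ)·∇²f(θ*)ᵀ is positive semidefinite and satisfies c²·∇²f(θ*)∇²f(θ*)ᵀ ⪯ H(θ*) ⪯ 2c²·∇²f(θ*)∇²f(θ*)ᵀ (Löwner order), and E_f(θ*) satisfies |⟨v, E_f(θ*)·v⟩| ≤ (2√d·H·λ_max(∇²f(θ*))·M₃ + d·H²·M₄)·‖v‖₂² for all v ∈ ℝ^d. -/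

import Mathlib

open MeasureTheory Matrix
open scoped RealInnerProductSpace

noncomputable section

variable {d : ℕ}

/-- Expected gradient outer product matrix of `f` w.r.t. measure `ρ`. -/
def EGOP (f : EuclideanSpace ℝ (Fin d) → ℝ) (ρ : Measure (EuclideanSpace ℝ (Fin d))) :
    Matrix (Fin d) (Fin d) ℝ :=
  fun i j => ∫ θ, gradient f θ i * gradient f θ j ∂ρ

/-- Hessian matrix of `f` at `θ`. -/
def hessMat (f : EuclideanSpace ℝ (Fin d) → ℝ) (θ : EuclideanSpace ℝ (Fin d)) :
    Matrix (Fin d) (Fin d) ℝ :=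
  fun i j => fderiv ℝ (gradient f) θ (EuclideanSpace.single j (1:ℝ)) i

/-- ℓ₂ operator (spectral) norm of a matrix. -/
def opNormM (M : Matrix (Fin d) (Fin d) ℝ) : ℝ :=
  ‖LinearMap.toContinuousLinearMap (Matrix.toEuclideanLin M)‖

/-- Largest eigenvalue (Rayleigh characterization) of a symmetric matrix. -/
def lambdaMax (M : Matrix (Fin d) (Fin d) ℝ) : ℝ :=
  sSup {r : ℝ | ∃ v : EuclideanSpace ℝ (Fin d), ‖v‖ = 1 ∧ r = ⟪v, Matrix.toEuclideanLin M v⟫}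

/-- The Hessian of `f` is `H`-Lipschitz. -/
def HessLipschitz (f : EuclideanSpace ℝ (Fin d) → ℝ) (H : ℝ) : Prop :=
  ∀ θ₁ θ₂ : EuclideanSpace ℝ (Fin d), opNormM (hessMat f θ₁ - hessMat f θ₂) ≤ H * ‖θ₁ - θ₂‖

/-- Coordinate-wise smoothness with constants `L` within the set `Θ`. -/
def CoordSmoothOn (f : EuclideanSpace ℝ (Fin d) → ℝ) (L : Fin d → ℝ)
    (Θ : Set (EuclideanSpace ℝ (Fin d))) : Prop :=
  ∀ θ₁ ∈ Θ, ∀ θ₂ ∈ Θ,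
    |f θ₁ - f θ₂ - ⟪gradient f θ₂, θ₁ - θ₂⟫| ≤ (1/2) * ∑ i, L i * (θ₁ i - θ₂ i)^2

/-- Coordinate-wise smoothness with constants `L` on all of ℝ^d. -/
def CoordSmooth (f : EuclideanSpace ℝ (Fin d) → ℝ) (L : Fin d → ℝ) : Prop :=
  CoordSmoothOn f L Set.univ

/-!
Write `A = ∇²f(θ*)` and `w = θ - θ*`. Since `∇f(θ*) = 0` and the Hessian is `H`-Lipschitz,
`∇f(θ) = A w + r(θ)` with `‖r(θ)‖ ≤ H‖w‖²`. The moment assumptions give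
`E[w wᵀ] = c²I + θ*θ*ᵀ`, so `E[(A w)(A w)ᵀ]` is exactly the Hessian term; it lies between
`c² A Aᵀ` and `2c² A Aᵀ` because `0 ⪯ θ*θ*ᵀ ⪯ ‖θ*‖² I ⪯ c² I`. The error term has quadratic form
`E[⟨∇f, v⟩² - ⟨A w, v⟩²]`, and `|⟨A w + r, v⟩² - ⟨A w, v⟩²| ≤ (‖r‖² + 2‖A w‖‖r‖)‖v‖²`, where
`‖A w‖ ≤ λ_max(A)‖w‖` because `A` is positive semidefinite. Integrating gives the bound even
without the factors `√d` and `d`.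
-/

namespace Matrix

variable {n : Type*} [Fintype n]

lemma posSemidef_smul_one_sub_vecMulVec [DecidableEq n] {x : EuclideanSpace ℝ n} {c : ℝ}
    (hc : ‖x‖ ≤ c) :
    (c ^ 2 • (1 : Matrix n n ℝ) - vecMulVec x x).PosSemidef := by
  refine posSemidef_iff_dotProduct_mulVec.mpr ⟨?_, fun y => ?_⟩
  · ext i j
    by_cases h : i = j <;> simp [vecMulVec_apply, h, eq_comm, mul_comm]
  have hcs : (x ⬝ᵥ y) ^ 2 ≤ ‖x‖ ^ 2 * (y ⬝ᵥ y) := by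
    rw [EuclideanSpace.real_norm_sq_eq]
    simpa [dotProduct, sq] using Finset.sum_mul_sq_le_sq_mul_sq Finset.univ x.ofLp y
  have hxc : ‖x‖ ^ 2 ≤ c ^ 2 := pow_le_pow_left₀ (norm_nonneg _) hc 2
  have hyy : 0 ≤ y ⬝ᵥ y := dotProduct_self_star_nonneg y
  simp [sub_mulVec, smul_mulVec, vecMulVec_mulVec, dotProduct_comm y x]
  nlinarith

lemma posSemidef_mul_mul_transpose {m : Type*} [Fintype m] {S : Matrix n n ℝ}
    (hS : S.PosSemidef) (A : Matrix m n ℝ) :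
    (A * S * Aᵀ).PosSemidef := by
  simpa using hS.mul_mul_conjTranspose_same A

end Matrix

lemma bddAbove_rayleigh (M : Matrix (Fin d) (Fin d) ℝ) :
    BddAbove {r : ℝ | ∃ v : EuclideanSpace ℝ (Fin d), ‖v‖ = 1 ∧ r = ⟪v, toEuclideanLin M v⟫} := by
  refine ⟨opNormM M, ?_⟩
  rintro r ⟨v, hv, rfl⟩
  calc ⟪v, toEuclideanLin M v⟫ ≤ ‖v‖ * ‖toEuclideanLin M v‖ := real_inner_le_norm _ _
    _ ≤ opNormM M := by
      simpa [hv, opNormM] using (LinearMap.toContinuousLinearMap (toEuclideanLin M)).le_opNorm v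

lemma inner_toEuclideanLin_self_le_lambdaMax (M : Matrix (Fin d) (Fin d) ℝ)
    (x : EuclideanSpace ℝ (Fin d)) : ⟪x, toEuclideanLin M x⟫ ≤ lambdaMax M * ‖x‖ ^ 2 := by
  rcases eq_or_ne x 0 with rfl | hx
  · simp
  have hx' : 0 < ‖x‖ := norm_pos_iff.mpr hx
  have hunit := le_csSup (bddAbove_rayleigh M) ⟨‖x‖⁻¹ • x, by simp [norm_smul, hx'.ne'], rfl⟩
  rw [map_smul, real_inner_smul_left, real_inner_smul_right, ← mul_assoc, ← sq,
    inv_pow, inv_mul_le_iff₀ (by positivity)] at hunit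
  rw [lambdaMax, mul_comm]
  exact hunit

lemma lambdaMax_nonneg {M : Matrix (Fin d) (Fin d) ℝ} (hM : M.PosSemidef) : 0 ≤ lambdaMax M :=
  Real.sSup_nonneg <| by
    rintro _ ⟨v, -, rfl⟩
    exact (isPositive_toEuclideanLin_iff.mpr hM).inner_nonneg_right v

lemma opNormM_le_lambdaMax {M : Matrix (Fin d) (Fin d) ℝ} (hM : M.PosSemidef) :
    opNormM M ≤ lambdaMax M := by
  have hT := isPositive_toEuclideanLin_iff.mpr hM
  rw [opNormM, ContinuousLinearMap.norm_eq_iSup_rayleighQuotient _ hT.isSymmetric]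
  refine ciSup_le fun x => ?_
  have hx := hT.inner_nonneg_left x
  have := inner_toEuclideanLin_self_le_lambdaMax M x
  rw [real_inner_comm] at this
  simp only [ContinuousLinearMap.rayleighQuotient, ContinuousLinearMap.reApplyInnerSelf_apply,
    LinearMap.coe_toContinuousLinearMap', RCLike.re_to_real]
  rw [abs_of_nonneg (by positivity)]
  exact div_le_of_le_mul₀ (sq_nonneg _) (lambdaMax_nonneg hM) this

lemma hessMat_eq_toMatrix (f : EuclideanSpace ℝ (Fin d) → ℝ) (θ : EuclideanSpace ℝ (Fin d)) :
    hessMat f θ = LinearMap.toMatrix (EuclideanSpace.basisFun (Fin d) ℝ).toBasis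
      (EuclideanSpace.basisFun (Fin d) ℝ).toBasis (fderiv ℝ (gradient f) θ) := by
  ext i j
  simp [hessMat, LinearMap.toMatrix_apply]

lemma toContinuousLinearMap_toEuclideanLin_hessMat (f : EuclideanSpace ℝ (Fin d) → ℝ)
    (θ : EuclideanSpace ℝ (Fin d)) :
    LinearMap.toContinuousLinearMap (toEuclideanLin (hessMat f θ)) = fderiv ℝ (gradient f) θ := by
  ext1 x
  rw [hessMat_eq_toMatrix, toEuclideanLin_eq_toLin_orthonormal, toLin_toMatrix]
  rfl

lemma norm_sub_sub_fderiv_le_of_lipschitz_fderiv {E F : Type*} [NormedAddCommGroup E]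
    [NormedSpace ℝ E] [NormedAddCommGroup F] [NormedSpace ℝ F] {g : E → F} {L : ℝ} {x : E}
    (hg : Differentiable ℝ g) (hL : ∀ y, ‖fderiv ℝ g y - fderiv ℝ g x‖ ≤ L * ‖y - x‖) (y : E) :
    ‖g y - g x - fderiv ℝ g x (y - x)‖ ≤ L * ‖y - x‖ ^ 2 := by
  rcases eq_or_ne y x with rfl | hyx
  · simp
  have hL0 : 0 ≤ L := nonneg_of_mul_nonneg_left ((norm_nonneg _).trans (hL y))
    (norm_pos_iff.mpr (sub_ne_zero.mpr hyx))
  have := (convex_closedBall x ‖y - x‖).norm_image_sub_le_of_norm_fderiv_le' (fun z _ => hg z)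
    (fun z hz => (hL z).trans (mul_le_mul_of_nonneg_left (mem_closedBall_iff_norm.mp hz) hL0))
    (Metric.mem_closedBall_self (norm_nonneg _)) (mem_closedBall_iff_norm.mpr le_rfl)
  rwa [mul_assoc, ← sq] at this

lemma ContDiff.differentiable_gradient {E : Type*} [NormedAddCommGroup E] [InnerProductSpace ℝ E]
    [CompleteSpace E] {f : E → ℝ} {n : WithTop ℕ∞} (hf : ContDiff ℝ n f) (hn : 2 ≤ n) :
    Differentiable ℝ (gradient f) :=
  (InnerProductSpace.toDual ℝ E).symm.differentiable.comp
    ((hf.fderiv_right (m := 1) hn).differentiable one_ne_zero)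

lemma HessLipschitz.norm_fderiv_gradient_sub_le {f : EuclideanSpace ℝ (Fin d) → ℝ} {H : ℝ}
    (hH : HessLipschitz f H) (x y : EuclideanSpace ℝ (Fin d)) :
    ‖fderiv ℝ (gradient f) x - fderiv ℝ (gradient f) y‖ ≤ H * ‖x - y‖ := by
  simpa only [opNormM, map_sub, toContinuousLinearMap_toEuclideanLin_hessMat] using hH x y

section SecondMoment

variable {α ι : Type*} [MeasurableSpace α] {μ : Measure α}
  {F : α → EuclideanSpace ℝ ι}

def secondMoment (μ : Measure α) (F : α → EuclideanSpace ℝ ι) : Matrix ι ι ℝ :=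
  Matrix.of fun i j => ∫ x, F x i * F x j ∂μ

lemma integrable_sub_const_apply_mul_apply [IsFiniteMeasure μ]
    (hF₁ : ∀ i, Integrable (fun x => F x i) μ)
    (hF₂ : ∀ i j, Integrable (fun x => F x i * F x j) μ) (a : EuclideanSpace ℝ ι) (i j : ι) :
    Integrable (fun x => (F x - a) i * (F x - a) j) μ := by
  simp only [PiLp.sub_apply, sub_mul, mul_sub]
  exact ((hF₂ i j).sub ((hF₁ j).const_mul _)).sub (((hF₁ i).mul_const _).sub (integrable_const _))

lemma secondMoment_sub_const [IsProbabilityMeasure μ] (hF₁ : ∀ i, Integrable (fun x => F x i) μ)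
    (hF₀ : ∀ i, ∫ x, F x i ∂μ = 0) (hF₂ : ∀ i j, Integrable (fun x => F x i * F x j) μ)
    (a : EuclideanSpace ℝ ι) :
    secondMoment μ (fun x => F x - a) = secondMoment μ F + vecMulVec a a := by
  ext i j
  simp only [secondMoment, of_apply, Matrix.add_apply, vecMulVec_apply, PiLp.sub_apply, sub_mul,
    mul_sub]
  have h₁ : Integrable (fun x => F x i * F x j - a i * F x j) μ :=
    (hF₂ i j).sub ((hF₁ j).const_mul _)
  have h₂ : Integrable (fun x => F x i * a j - a i * a j) μ :=
    ((hF₁ i).mul_const _).sub (integrable_const _)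
  rw [integral_sub h₁ h₂, integral_sub (hF₂ i j) ((hF₁ j).const_mul _),
    integral_sub ((hF₁ i).mul_const _) (integrable_const _), integral_mul_const,
    integral_const_mul, hF₀, hF₀, integral_const]
  simp

variable [Fintype ι]

lemma real_inner_sq_eq_sum (u v : EuclideanSpace ℝ ι) :
    ⟪u, v⟫ ^ 2 = ∑ i, ∑ j, v i * (u i * u j) * v j := by
  simp only [EuclideanSpace.inner_eq_star_dotProduct, dotProduct, star_trivial, sq,
    Finset.sum_mul_sum]
  exact Finset.sum_congr rfl fun i _ => Finset.sum_congr rfl fun j _ => by ring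

lemma integrable_real_inner_sq (hF : ∀ i j, Integrable (fun x => F x i * F x j) μ)
    (v : EuclideanSpace ℝ ι) : Integrable (fun x => ⟪F x, v⟫ ^ 2) μ := by
  simp_rw [real_inner_sq_eq_sum]
  exact integrable_finsetSum _ fun i _ => integrable_finsetSum _ fun j _ =>
    ((hF i j).const_mul _).mul_const _

lemma inner_toEuclideanLin_secondMoment [DecidableEq ι]
    (hF : ∀ i j, Integrable (fun x => F x i * F x j) μ) (v : EuclideanSpace ℝ ι) :
    ⟪v, toEuclideanLin (secondMoment μ F) v⟫ = ∫ x, ⟪F x, v⟫ ^ 2 ∂μ := by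
  simp_rw [real_inner_sq_eq_sum]
  rw [integral_finsetSum _ fun i _ => integrable_finsetSum _ fun j _ =>
    ((hF i j).const_mul _).mul_const _]
  simp only [EuclideanSpace.inner_eq_star_dotProduct, dotProduct, star_trivial, ofLp_toLpLin,
    toLin'_apply, mulVec, secondMoment, of_apply, Finset.sum_mul]
  refine Finset.sum_congr rfl fun i _ => ?_
  rw [integral_finsetSum _ fun j _ => ((hF i j).const_mul _).mul_const _]
  refine Finset.sum_congr rfl fun j _ => ?_
  rw [integral_mul_const, integral_const_mul]
  ring

lemma inner_toEuclideanLin_mul_secondMoment_mul_transpose [DecidableEq ι] {m : Type*} [Fintype m]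
    [DecidableEq m] (hF : ∀ i j, Integrable (fun x => F x i * F x j) μ) (A : Matrix m ι ℝ)
    (v : EuclideanSpace ℝ m) :
    ⟪v, toEuclideanLin (A * secondMoment μ F * Aᵀ) v⟫ =
      ∫ x, ⟪toEuclideanLin A (F x), v⟫ ^ 2 ∂μ := by
  rw [← conjTranspose_eq_transpose_of_trivial, toLpLin_mul 2 2 2, toLpLin_mul 2 2 2,
    toEuclideanLin_conjTranspose_eq_adjoint]
  rw [LinearMap.comp_apply, LinearMap.comp_apply, ← LinearMap.adjoint_inner_left]
  exact (inner_toEuclideanLin_secondMoment hF _).trans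
    (by simp only [LinearMap.adjoint_inner_right])

end SecondMoment

lemma EGOP_eq_secondMoment (f : EuclideanSpace ℝ (Fin d) → ℝ)
    (ρ : Measure (EuclideanSpace ℝ (Fin d))) : EGOP f ρ = secondMoment ρ (gradient f) :=
  rfl

lemma abs_real_inner_sq_sub_real_inner_sq_le {E : Type*} [NormedAddCommGroup E]
    [InnerProductSpace ℝ E] {u w v : E} {β σ : ℝ} (hw : ‖w‖ ≤ β) (huw : ‖u - w‖ ≤ σ) :
    |⟪u, v⟫ ^ 2 - ⟪w, v⟫ ^ 2| ≤ (σ ^ 2 + 2 * β * σ) * ‖v‖ ^ 2 := by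
  have hb : |⟪w, v⟫| ≤ β * ‖v‖ := (abs_real_inner_le_norm w v).trans (by gcongr)
  have hs : |⟪u, v⟫ - ⟪w, v⟫| ≤ σ * ‖v‖ := by
    rw [← inner_sub_left]
    exact (abs_real_inner_le_norm _ v).trans (by gcongr)
  calc |⟪u, v⟫ ^ 2 - ⟪w, v⟫ ^ 2|
      = |(⟪u, v⟫ - ⟪w, v⟫) ^ 2 + 2 * ⟪w, v⟫ * (⟪u, v⟫ - ⟪w, v⟫)| := by ring_nf
    _ ≤ |⟪u, v⟫ - ⟪w, v⟫| ^ 2 + 2 * |⟪w, v⟫| * |⟪u, v⟫ - ⟪w, v⟫| :=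
      (abs_add_le _ _).trans_eq (by rw [abs_pow, abs_mul, abs_mul, abs_two])
    _ ≤ (σ * ‖v‖) ^ 2 + 2 * (β * ‖v‖) * (σ * ‖v‖) := by
      gcongr
      exact mul_nonneg zero_le_two ((abs_nonneg _).trans hb)
    _ = (σ ^ 2 + 2 * β * σ) * ‖v‖ ^ 2 := by ring

theorem abs_inner_toEuclideanLin_EGOP_sub_le {f : EuclideanSpace ℝ (Fin d) → ℝ} {H : ℝ}
    {θs : EuclideanSpace ℝ (Fin d)} {ρ : Measure (EuclideanSpace ℝ (Fin d))}
    (hf : Differentiable ℝ (gradient f)) (hH : HessLipschitz f H) (hgrad : gradient f θs = 0)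
    (hpsd : (hessMat f θs).PosSemidef)
    (hIntEGOP : ∀ i j, Integrable (fun θ => gradient f θ i * gradient f θ j) ρ)
    (hIntCov : ∀ i j, Integrable (fun θ => (θ - θs) i * (θ - θs) j) ρ)
    (hM3 : Integrable (fun θ => ‖θ - θs‖ ^ 3) ρ) (hM4 : Integrable (fun θ => ‖θ - θs‖ ^ 4) ρ)
    (v : EuclideanSpace ℝ (Fin d)) :
    |⟪v, toEuclideanLin (EGOP f ρ -
        hessMat f θs * secondMoment ρ (fun θ => θ - θs) * (hessMat f θs)ᵀ) v⟫| ≤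
      (2 * H * lambdaMax (hessMat f θs) * ∫ θ, ‖θ - θs‖ ^ 3 ∂ρ +
        H ^ 2 * ∫ θ, ‖θ - θs‖ ^ 4 ∂ρ) * ‖v‖ ^ 2 := by
  set D := fderiv ℝ (gradient f) θs
  set lmax := lambdaMax (hessMat f θs)
  have hD : toEuclideanLin (hessMat f θs) = (D : _ →ₗ[ℝ] _) :=
    congrArg ContinuousLinearMap.toLinearMap (toContinuousLinearMap_toEuclideanLin_hessMat f θs)
  have hDnorm : ‖D‖ ≤ lmax := by
    simpa only [opNormM, toContinuousLinearMap_toEuclideanLin_hessMat] using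
      opNormM_le_lambdaMax hpsd
  have hpt (θ) : |⟪gradient f θ, v⟫ ^ 2 - ⟪D (θ - θs), v⟫ ^ 2| ≤
      (2 * H * lmax * ‖θ - θs‖ ^ 3 + H ^ 2 * ‖θ - θs‖ ^ 4) * ‖v‖ ^ 2 := by
    have hlin : ‖D (θ - θs)‖ ≤ lmax * ‖θ - θs‖ := (D.le_opNorm _).trans (by gcongr)
    have htaylor : ‖gradient f θ - D (θ - θs)‖ ≤ H * ‖θ - θs‖ ^ 2 := by
      simpa [hgrad] using norm_sub_sub_fderiv_le_of_lipschitz_fderiv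
        hf (fun y => hH.norm_fderiv_gradient_sub_le y θs) θ
    refine (abs_real_inner_sq_sub_real_inner_sq_le hlin htaylor).trans_eq ?_
    ring
  have hIntD : Integrable (fun θ => ⟪D (θ - θs), v⟫ ^ 2) ρ := by
    refine (integrable_real_inner_sq hIntCov
      (LinearMap.adjoint (toEuclideanLin (hessMat f θs)) v)).congr (ae_of_all _ fun θ => ?_)
    simp only [LinearMap.adjoint_inner_right, hD]
    rfl
  have hquad : ⟪v, toEuclideanLin (EGOP f ρ -
        hessMat f θs * secondMoment ρ (fun θ => θ - θs) * (hessMat f θs)ᵀ) v⟫ =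
      ∫ θ, (⟪gradient f θ, v⟫ ^ 2 - ⟪D (θ - θs), v⟫ ^ 2) ∂ρ := by
    rw [map_sub, LinearMap.sub_apply, inner_sub_right, EGOP_eq_secondMoment,
      inner_toEuclideanLin_secondMoment hIntEGOP,
      inner_toEuclideanLin_mul_secondMoment_mul_transpose hIntCov, hD,
      integral_sub (integrable_real_inner_sq hIntEGOP v) hIntD]
    rfl
  rw [hquad]
  calc |∫ θ, (⟪gradient f θ, v⟫ ^ 2 - ⟪D (θ - θs), v⟫ ^ 2) ∂ρ|
      ≤ ∫ θ, |⟪gradient f θ, v⟫ ^ 2 - ⟪D (θ - θs), v⟫ ^ 2| ∂ρ := abs_integral_le_integral_abs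
    _ ≤ ∫ θ, (2 * H * lmax * ‖θ - θs‖ ^ 3 + H ^ 2 * ‖θ - θs‖ ^ 4) * ‖v‖ ^ 2 ∂ρ :=
      integral_mono ((integrable_real_inner_sq hIntEGOP v).sub hIntD).abs
        (((hM3.const_mul _).add (hM4.const_mul _)).mul_const _) hpt
    _ = _ := by
      rw [integral_mul_const, integral_add (hM3.const_mul _) (hM4.const_mul _),
        integral_const_mul, integral_const_mul]

/-- Under a Lipschitz-Hessian assumption, for a stationary point `θ*` with PSD
Hessian and a mean-zero measure `ρ` with covariance `c²I`, `c ≥ ‖θ*‖`, the EGOP decomposes as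
`EGOP(f) = H(θ*) + E_f(θ*)` with `H(θ*) = ∇²f(θ*)(c²I + θ*θ*ᵀ)∇²f(θ*)ᵀ` PSD satisfying
`c²∇²f(θ*)∇²f(θ*)ᵀ ⪯ H(θ*) ⪯ 2c²∇²f(θ*)∇²f(θ*)ᵀ` and
`|⟨v, E_f(θ*) v⟩| ≤ (2√d·H·λ_max(∇²f(θ*))·M₃ + d·H²·M₄)‖v‖²`. -/
theorem EGOP_eq_hessian_term_add_error
    (d : ℕ) (f : EuclideanSpace ℝ (Fin d) → ℝ) (H c : ℝ)
    (hf : ContDiff ℝ 3 f) (hH : HessLipschitz f H)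
    (θs : EuclideanSpace ℝ (Fin d)) (hgrad : gradient f θs = 0)
    (hpsd : (hessMat f θs).PosSemidef)
    (ρ : Measure (EuclideanSpace ℝ (Fin d))) [IsProbabilityMeasure ρ]
    (hIntEGOP : ∀ i j, Integrable (fun θ => gradient f θ i * gradient f θ j) ρ)
    (hmeanInt : ∀ i, Integrable (fun θ : EuclideanSpace ℝ (Fin d) => θ i) ρ)
    (hmean : ∀ i, ∫ θ, θ i ∂ρ = 0)
    (hcovInt : ∀ i j, Integrable (fun θ : EuclideanSpace ℝ (Fin d) => θ i * θ j) ρ)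
    (hcov : ∀ i j, ∫ θ, θ i * θ j ∂ρ = if i = j then c ^ 2 else 0)
    (hc : ‖θs‖ ≤ c)
    (hM3 : Integrable (fun θ : EuclideanSpace ℝ (Fin d) => ‖θ - θs‖ ^ 3) ρ)
    (hM4 : Integrable (fun θ : EuclideanSpace ℝ (Fin d) => ‖θ - θs‖ ^ 4) ρ) :
    ∃ E : Matrix (Fin d) (Fin d) ℝ,
      EGOP f ρ =
          hessMat f θs * (c ^ 2 • (1 : Matrix (Fin d) (Fin d) ℝ) + Matrix.vecMulVec θs θs) *
            (hessMat f θs)ᵀ + E ∧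
      (hessMat f θs * (c ^ 2 • (1 : Matrix (Fin d) (Fin d) ℝ) + Matrix.vecMulVec θs θs) *
          (hessMat f θs)ᵀ).PosSemidef ∧
      (hessMat f θs * (c ^ 2 • (1 : Matrix (Fin d) (Fin d) ℝ) + Matrix.vecMulVec θs θs) *
          (hessMat f θs)ᵀ - c ^ 2 • (hessMat f θs * (hessMat f θs)ᵀ)).PosSemidef ∧
      ((2 * c ^ 2) • (hessMat f θs * (hessMat f θs)ᵀ) -
          hessMat f θs * (c ^ 2 • (1 : Matrix (Fin d) (Fin d) ℝ) + Matrix.vecMulVec θs θs) *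
            (hessMat f θs)ᵀ).PosSemidef ∧
      ∀ v : EuclideanSpace ℝ (Fin d),
        |⟪v, Matrix.toEuclideanLin E v⟫| ≤
          (2 * Real.sqrt d * H * lambdaMax (hessMat f θs) * (∫ θ, ‖θ - θs‖ ^ 3 ∂ρ) +
              d * H ^ 2 * (∫ θ, ‖θ - θs‖ ^ 4 ∂ρ)) * ‖v‖ ^ 2 := by
  set A := hessMat f θs
  have hAA (r : ℝ) : r • (A * Aᵀ) = A * (r • 1) * Aᵀ := by simp
  have hS : secondMoment ρ (fun θ => θ - θs) = c ^ 2 • 1 + vecMulVec θs θs := by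
    rw [secondMoment_sub_const (F := fun θ => θ) hmeanInt hmean hcovInt]
    congr
    ext i j
    simp [secondMoment, hcov, one_apply]
  refine ⟨EGOP f ρ - A * (c ^ 2 • 1 + vecMulVec θs θs) * Aᵀ, (add_sub_cancel _ _).symm,
    posSemidef_mul_mul_transpose
      ((PosSemidef.one.smul (sq_nonneg c)).add (posSemidef_vecMulVec_self_star _)) A, ?_, ?_,
    fun v => ?_⟩
  · rw [hAA, ← sub_mul, ← mul_sub, add_sub_cancel_left]
    exact posSemidef_mul_mul_transpose (posSemidef_vecMulVec_self_star _) A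
  · rw [hAA, ← sub_mul, ← mul_sub, two_mul, add_smul, add_sub_add_left_eq_sub]
    exact posSemidef_mul_mul_transpose (posSemidef_smul_one_sub_vecMulVec hc) A
  rcases eq_or_ne v 0 with rfl | hv
  · simp
  have hd : (1 : ℝ) ≤ d := by
    have : d ≠ 0 := by rintro rfl; exact hv (Subsingleton.elim _ _)
    exact_mod_cast Nat.one_le_iff_ne_zero.mpr this
  have hH0 : 0 ≤ H :=
    nonneg_of_mul_nonneg_left ((norm_nonneg _).trans (hH v 0)) (by simpa using hv)
  rw [← hS]
  have hIntCov := integrable_sub_const_apply_mul_apply (F := fun θ => θ) hmeanInt hcovInt θs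
  refine (abs_inner_toEuclideanLin_EGOP_sub_le (hf.differentiable_gradient (by norm_num)) hH
    hgrad hpsd hIntEGOP hIntCov hM3 hM4 v).trans ?_
  have hlmax := lambdaMax_nonneg hpsd
  have hsqrt : 1 ≤ √(d : ℝ) := Real.one_le_sqrt.mpr hd
  gcongr ?_ * _
  calc _ = 2 * 1 * H * lambdaMax A * ∫ θ, ‖θ - θs‖ ^ 3 ∂ρ +
        1 * H ^ 2 * ∫ θ, ‖θ - θs‖ ^ 4 ∂ρ := by ring
    _ ≤ _ := by gcongr

end
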